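/- Let Q be a nondegenerate complex quadratic form in three variables with associated operator Δ_Q. If S is a polynomial with Δ_Q((Q − 1)·S) = 0, then S = 0. -/

import Mathlib

/-!
Since `Δ_Q` pairs the Hessian of `Q` with its inverse matrix, the product rule gives
`Δ_Q(Q·f) = Q·Δ_Q f + 4·E f + 2n·f` with `E = Σ xᵢ∂ᵢ` the Euler operator, so for `g`
homogeneous of degree `d`: `Δ_Q(Q^{s+1} g) = Q^{s+1}·Δ_Q g + c·Q^s g` with
`c = 2(s+1)(2d+2s+n) > 0`. Hence `Δ_Q(Q^{s+1} g) = 0` forces `g = Q·h` with `h = -Δ_Q g / c`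
homogeneous of degree `d - 2` and `Δ_Q(Q^{s+2} h) = 0`, and descent on `d` gives `g = 0`.
For `S ≠ 0` of total degree `d`, the degree-`d` part of `Δ_Q((Q - 1)·S) = 0` is
`Δ_Q(Q·S_d) = 0` for the top homogeneous component `S_d ≠ 0`, a contradiction.
-/

open MvPolynomial

/-- The Laplace-type operator `Δ_Q = Σ b^{jk} ∂_j ∂_k` associated to an invertible
symmetric matrix `B` (with `(b^{jk}) = B⁻¹`). -/
noncomputable def lapQ (B : Matrix (Fin 3) (Fin 3) ℂ) (P : MvPolynomial (Fin 3) ℂ) :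
    MvPolynomial (Fin 3) ℂ :=
  ∑ j : Fin 3, ∑ k : Fin 3, B⁻¹ j k • pderiv j (pderiv k P)

/-- The quadratic form `Q(v) = v B vᵀ` as a polynomial. -/
noncomputable def quadForm (B : Matrix (Fin 3) (Fin 3) ℂ) : MvPolynomial (Fin 3) ℂ :=
  ∑ j : Fin 3, ∑ k : Fin 3, B j k • (X j * X k)

theorem Matrix.IsSymm.of_mul_eq_one {n R : Type*} [Fintype n] [DecidableEq n] [CommSemiring R]
    {A B : Matrix n n R} (hB : B.IsSymm) (h : A * B = 1) : A.IsSymm := by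
  have h' : B * A = 1 := mul_eq_one_comm.mp h
  calc A.transpose = A.transpose * (B * A) := by rw [h', Matrix.mul_one]
    _ = (B * A).transpose * A := by rw [Matrix.transpose_mul, hB.eq, Matrix.mul_assoc]
    _ = A := by rw [h', Matrix.transpose_one, Matrix.one_mul]

namespace MvPolynomial

variable {σ R : Type*} [CommSemiring R]

theorem homogeneousComponent_pderiv (i : σ) (n : ℕ) (f : MvPolynomial σ R) :
    homogeneousComponent n (pderiv i f) = pderiv i (homogeneousComponent (n + 1) f) := by
  ext m
  simp only [coeff_homogeneousComponent, coeff_pderiv, map_add, Finsupp.degree_single]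
  split_ifs <;> simp_all

attribute [local instance] gradedAlgebra in
theorem homogeneousComponent_mul_of_isHomogeneous {q : MvPolynomial σ R} {k : ℕ}
    (hq : q.IsHomogeneous k) (n : ℕ) (f : MvPolynomial σ R) :
    homogeneousComponent (n + k) (q * f) = q * homogeneousComponent n f := by
  have := DirectSum.coe_decompose_mul_of_left_mem_of_le (homogeneousSubmodule σ R) (b := f)
    ((mem_homogeneousSubmodule k q).mpr hq) (Nat.le_add_left k n)
  rw [Nat.add_sub_cancel] at this
  rwa [← decomposition.decompose'_apply, ← decomposition.decompose'_apply]

theorem homogeneousComponent_totalDegree_ne_zero {f : MvPolynomial σ R} (hf : f ≠ 0) :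
    homogeneousComponent f.totalDegree f ≠ 0 := by
  obtain ⟨m, hm, hmd⟩ := Finset.exists_mem_eq_sup f.support (support_nonempty.mpr hf)
    fun s => s.sum fun _ e => e
  refine ne_zero_iff.mpr ⟨m, ?_⟩
  rw [coeff_homogeneousComponent, if_pos (by rw [totalDegree, hmd]; rfl)]
  exact mem_support_iff.mp hm

section Laplacian

variable [Fintype σ]

noncomputable def laplacian (A : Matrix σ σ R) : MvPolynomial σ R →ₗ[R] MvPolynomial σ R :=
  ∑ j, ∑ k, A j k • ((pderiv j).toLinearMap ∘ₗ (pderiv k).toLinearMap)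

theorem laplacian_apply (A : Matrix σ σ R) (f : MvPolynomial σ R) :
    laplacian A f = ∑ j, ∑ k, A j k • pderiv j (pderiv k f) := by
  simp [laplacian]

theorem homogeneousComponent_laplacian (A : Matrix σ σ R) (n : ℕ) (f : MvPolynomial σ R) :
    homogeneousComponent n (laplacian A f) = laplacian A (homogeneousComponent (n + 2) f) := by
  simp only [laplacian_apply, map_sum, map_smul, homogeneousComponent_pderiv]

theorem IsHomogeneous.laplacian {f : MvPolynomial σ R} {n : ℕ} (hf : f.IsHomogeneous n)
    (A : Matrix σ σ R) : (laplacian A f).IsHomogeneous (n - 2) := by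
  rw [laplacian_apply]
  refine IsHomogeneous.sum _ _ _ fun j _ => IsHomogeneous.sum _ _ _ fun k _ => ?_
  rw [smul_eq_C_mul]
  exact ((hf.pderiv (i := k)).pderiv (i := j)).C_mul _

noncomputable def quadPoly (B : Matrix σ σ R) : MvPolynomial σ R :=
  ∑ j, ∑ k, B j k • (X j * X k)

theorem isHomogeneous_quadPoly (B : Matrix σ σ R) : (quadPoly B).IsHomogeneous 2 :=
  IsHomogeneous.sum _ _ _ fun j _ => IsHomogeneous.sum _ _ _ fun k _ => by
    rw [smul_eq_C_mul]
    exact ((isHomogeneous_X R j).mul (isHomogeneous_X R k)).C_mul _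

theorem pderiv_quadPoly {B : Matrix σ σ R} (hB : B.IsSymm) (i : σ) :
    pderiv i (quadPoly B) = ∑ k, (2 * B i k) • X k := by
  classical
  simp [quadPoly, pderiv_X, Pi.single_apply, Finset.sum_add_distrib, add_smul, two_mul, hB.apply]

theorem laplacian_mul {A : Matrix σ σ R} (hA : A.IsSymm) (p q : MvPolynomial σ R) :
    laplacian A (p * q) = laplacian A p * q
      + 2 • ∑ j, ∑ k, A j k • (pderiv k p * pderiv j q) + p * laplacian A q := by
  have cross : ∑ j, ∑ k, A j k • (pderiv j p * pderiv k q)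
      = ∑ j, ∑ k, A j k • (pderiv k p * pderiv j q) := by
    rw [Finset.sum_comm]
    simp_rw [hA.apply]
  simp only [laplacian_apply, pderiv_mul, map_add, smul_add, Finset.sum_add_distrib, cross,
    Finset.sum_mul, Finset.mul_sum, smul_mul_assoc, mul_smul_comm]
  abel

variable [DecidableEq σ]

theorem sum_smul_pderiv_quadPoly {A B : Matrix σ σ R} (hB : B.IsSymm) (hAB : A * B = 1)
    (j : σ) :
    ∑ k, A j k • pderiv k (quadPoly B) = (2 : R) • X j := by
  simp_rw [pderiv_quadPoly hB, Finset.smul_sum, smul_smul]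
  rw [Finset.sum_comm]
  simp_rw [← Finset.sum_smul, mul_left_comm _ (2 : R), ← Finset.mul_sum, ← Matrix.mul_apply,
    hAB, Matrix.one_apply, mul_ite, mul_one, mul_zero, ite_smul, zero_smul, Finset.sum_ite_eq,
    Finset.mem_univ, if_true]

theorem laplacian_quadPoly {A B : Matrix σ σ R} (hB : B.IsSymm) (hAB : A * B = 1) :
    laplacian A (quadPoly B) = 2 * Fintype.card σ := by
  have h (j : σ) : ∑ k, A j k • pderiv j (pderiv k (quadPoly B)) = 2 := by
    calc ∑ k, A j k • pderiv j (pderiv k (quadPoly B))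
        = pderiv j (∑ k, A j k • pderiv k (quadPoly B)) := by
          simp only [map_sum, Derivation.map_smul]
      _ = 2 := by
          rw [sum_smul_pderiv_quadPoly hB hAB j, Derivation.map_smul, pderiv_X_self, smul_eq_C_mul,
            mul_one, map_ofNat]
  rw [laplacian_apply, Finset.sum_congr rfl fun j _ => h j, Finset.sum_const, Finset.card_univ,
    nsmul_eq_mul, mul_comm]

theorem laplacian_quadPoly_mul {A B : Matrix σ σ R} (hB : B.IsSymm) (hAB : A * B = 1)
    (f : MvPolynomial σ R) :
    laplacian A (quadPoly B * f) = quadPoly B * laplacian A f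
      + 4 • ∑ i, X i * pderiv i f + (2 * Fintype.card σ) • f := by
  have cross : ∑ j, ∑ k, A j k • (pderiv k (quadPoly B) * pderiv j f)
      = 2 • ∑ j, X j * pderiv j f := by
    simp_rw [← smul_mul_assoc, ← Finset.sum_mul, sum_smul_pderiv_quadPoly hB hAB,
      Finset.smul_sum, smul_mul_assoc, ofNat_smul_eq_nsmul]
  rw [laplacian_mul (hB.of_mul_eq_one hAB), laplacian_quadPoly hB hAB, cross, smul_smul,
    nsmul_eq_mul (2 * _)]
  ring

theorem laplacian_quadPoly_pow_mul {A B : Matrix σ σ R} (hB : B.IsSymm) (hAB : A * B = 1)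
    {g : MvPolynomial σ R} {d : ℕ} (hg : g.IsHomogeneous d) (s : ℕ) :
    laplacian A (quadPoly B ^ (s + 1) * g) = quadPoly B ^ (s + 1) * laplacian A g
      + (2 * (s + 1) * (2 * d + 2 * s + Fintype.card σ)) • (quadPoly B ^ s * g) := by
  induction s with
  | zero =>
    rw [zero_add, pow_one, pow_zero, one_mul, laplacian_quadPoly_mul hB hAB, hg.sum_X_mul_pderiv]
    module
  | succ s ih =>
    have hhom := ((isHomogeneous_quadPoly B).pow (s + 1)).mul hg
    rw [pow_succ', mul_assoc, laplacian_quadPoly_mul hB hAB, hhom.sum_X_mul_pderiv, ih]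
    simp only [nsmul_eq_mul]
    push_cast
    ring

end Laplacian

section Field

variable {K : Type*} [Field K] [CharZero K] [Fintype σ] [DecidableEq σ] [Nonempty σ]
  {A B : Matrix σ σ K}

theorem quadPoly_ne_zero (hB : B.IsSymm) (hAB : A * B = 1) : quadPoly B ≠ 0 := by
  intro hQ
  have h := laplacian_quadPoly hB hAB
  rw [hQ, map_zero, eq_comm] at h
  exact (by positivity : 2 * Fintype.card σ ≠ 0) (by exact_mod_cast h)

theorem eq_zero_of_laplacian_quadPoly_pow_mul (hB : B.IsSymm) (hAB : A * B = 1)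
    {g : MvPolynomial σ K} {d : ℕ} (hg : g.IsHomogeneous d) {s : ℕ}
    (h : laplacian A (quadPoly B ^ (s + 1) * g) = 0) : g = 0 := by
  induction d using Nat.strong_induction_on generalizing g s with
  | _ d ih =>
  set c : K := ((2 * (s + 1) * (2 * d + 2 * s + Fintype.card σ) : ℕ) : K)
  have hc : c ≠ 0 := Nat.cast_ne_zero.mpr (by positivity)
  have hQg : quadPoly B * laplacian A g + C c * g = 0 := by
    rw [laplacian_quadPoly_pow_mul hB hAB hg s, nsmul_eq_mul] at h
    refine (mul_eq_zero.mp ?_).resolve_left (pow_ne_zero s (quadPoly_ne_zero hB hAB))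
    rw [← h, map_natCast]
    ring
  set q := C (-c⁻¹) * laplacian A g
  have hgq : g = quadPoly B * q :=
    calc g = C c⁻¹ * (C c * g) := by
          rw [← mul_assoc, ← map_mul, inv_mul_cancel₀ hc, map_one, one_mul]
      _ = quadPoly B * q := by
        rw [eq_neg_of_add_eq_zero_right hQg]
        simp only [q, map_neg]
        ring
  have hq : q.IsHomogeneous (d - 2) := (hg.laplacian A).C_mul _
  by_contra hg0
  have hd : 2 + (d - 2) = d :=
    ((isHomogeneous_quadPoly B).mul hq).inj_right (hgq ▸ hg) (hgq ▸ hg0)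
  have hq0 : q = 0 := ih (d - 2) (by omega) hq (s := s + 1) (by rwa [pow_succ, mul_assoc, ← hgq])
  exact hg0 (by rw [hgq, hq0, mul_zero])

theorem eq_zero_of_laplacian_quadPoly_sub_one_mul (hB : B.IsSymm) (hAB : A * B = 1)
    {S : MvPolynomial σ K} (h : laplacian A ((quadPoly B - 1) * S) = 0) : S = 0 := by
  by_contra hS
  apply homogeneousComponent_totalDegree_ne_zero hS
  refine eq_zero_of_laplacian_quadPoly_pow_mul hB hAB (homogeneousComponent_isHomogeneous _ _)
    (s := 0) ?_
  rw [zero_add, pow_one]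
  have h_top := congrArg (homogeneousComponent S.totalDegree) h
  rw [homogeneousComponent_laplacian, sub_mul, one_mul, map_sub,
    homogeneousComponent_mul_of_isHomogeneous (isHomogeneous_quadPoly B)] at h_top
  simpa [homogeneousComponent_eq_zero] using h_top

end Field

end MvPolynomial

/-- For a nondegenerate quadratic form `Q` in three variables:
if `Δ_Q((Q − 1)·S) = 0` then `S = 0`; i.e. the kernel of `Δ_Q` meets the ideal
`⟨Q − 1⟩` only in `0`. -/
theorem lapQ_ker_inter_ideal (B : Matrix (Fin 3) (Fin 3) ℂ)
    (hB : B.IsSymm) (hBinv : IsUnit B.det)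
    (S : MvPolynomial (Fin 3) ℂ)
    (h : lapQ B ((quadForm B - 1) * S) = 0) : S = 0 :=
  eq_zero_of_laplacian_quadPoly_sub_one_mul hB (Matrix.nonsing_inv_mul B hBinv)
    (by rwa [laplacian_apply])
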